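/- arXiv:1009.0533 — 4 statements merged into one kernel-verified Lean document; each statement's English description precedes it below -/
import Mathlib

section
/- Let ψ_{n,k} : [0,1] → ℝ^{d×d} be functions with uniform bound ‖ψ_{n,k}‖_∞ ≤ M·2^{−(n+1)/2} for some constant M, and let ξ = (ξ_{n,k}) be coefficients in ℝ^d such that for some δ ∈ (0,1) and N₀, sup_k |ξ_{n,k}| < 2^{nδ/2} for all n > N₀. Then the series Σ_{n,k} ψ_{n,k}(t)·ξ_{n,k} converges uniformly on [0,1] (hence defines a continuous function), with tail bound: the partial sums over n ≥ N differ by at most (M/√2)·Σ_{n≥N} 2^{n(δ−1)/2} in sup norm. -/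
/-!
At level `n` the supports of the `ψ_{n,k}` are disjoint, so at each `t` at most one term of the
inner sum is nonzero and the whole level is bounded by `M·2^{-(n+1)/2}·2^{nδ/2} =
(M/√2)·2^{n(δ-1)/2}`. For `δ < 1` these bounds form a convergent geometric series, so the
Weierstrass M-test gives uniform convergence of the continuous partial sums (the finitely many
levels `n ≤ N₀`, where `ξ` is uncontrolled, do not matter) and bounds the tails.
-/

open Filter Finset

theorem Finset.norm_sum_le_of_pairwise_eq_zero_or_eq_zero {ι E : Type*}
    [SeminormedAddCommGroup E] {s : Finset ι} {f : ι → E} {C : ℝ} (hs : s.Nonempty)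
    (hf : (s : Set ι).Pairwise fun i j => f i = 0 ∨ f j = 0) (hC : ∀ i ∈ s, ‖f i‖ ≤ C) :
    ‖∑ i ∈ s, f i‖ ≤ C := by
  by_cases hex : ∃ i ∈ s, f i ≠ 0
  · obtain ⟨i, hi, hfi⟩ := hex
    rw [sum_eq_single_of_mem i hi fun j hj hji => (hf hj hi hji).resolve_right hfi]
    exact hC i hi
  · push Not at hex
    obtain ⟨i, hi⟩ := hs
    rw [sum_eq_zero hex]
    simpa [hex i hi] using hC i hi

theorem Finset.norm_sum_apply_le_of_pairwise_eq_zero_or_eq_zero {ι 𝕜 E F : Type*}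
    [NontriviallyNormedField 𝕜] [SeminormedAddCommGroup E] [NormedSpace 𝕜 E]
    [SeminormedAddCommGroup F] [NormedSpace 𝕜 F] {s : Finset ι} {A : ι → E →L[𝕜] F}
    {x : ι → E} {a b : ℝ} (hs : s.Nonempty)
    (hA : (s : Set ι).Pairwise fun i j => A i = 0 ∨ A j = 0)
    (ha : ∀ i ∈ s, ‖A i‖ ≤ a) (hb : ∀ i ∈ s, ‖x i‖ ≤ b) :
    ‖∑ i ∈ s, A i (x i)‖ ≤ a * b := by
  refine norm_sum_le_of_pairwise_eq_zero_or_eq_zero hs ?_ fun i hi => ?_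
  · exact hA.mono' fun i j h => h.imp (fun hi => by simp [hi]) fun hj => by simp [hj]
  · calc ‖A i (x i)‖ ≤ ‖A i‖ * ‖x i‖ := (A i).le_opNorm _
      _ ≤ a * b :=
        mul_le_mul (ha i hi) (hb i hi) (norm_nonneg _) ((norm_nonneg _).trans (ha i hi))

theorem norm_sum_Ico_le_tsum {E : Type*} [SeminormedAddCommGroup E] {f : ℕ → E} {u : ℕ → ℝ}
    {N₁ N₂ : ℕ} (hf : ∀ n, N₁ ≤ n → ‖f n‖ ≤ u n) (hu : Summable u) :
    ‖∑ n ∈ Ico N₁ N₂, f n‖ ≤ ∑' j, u (N₁ + j) := by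
  have hu' : Summable fun j => u (N₁ + j) := by
    simpa only [add_comm] using (summable_nat_add_iff N₁).mpr hu
  calc ‖∑ n ∈ Ico N₁ N₂, f n‖ ≤ ∑ n ∈ Ico N₁ N₂, u n :=
        (norm_sum_le _ _).trans (sum_le_sum fun n hn => hf n (mem_Ico.mp hn).1)
    _ = ∑ j ∈ range (N₂ - N₁), u (N₁ + j) := sum_Ico_eq_sum_range _ _ _
    _ ≤ ∑' j, u (N₁ + j) :=
        hu'.sum_le_tsum _ fun j _ => (norm_nonneg _).trans (hf _ (Nat.le_add_right _ _))

theorem Real.summable_rpow_natCast_mul_of_neg {b c : ℝ} (hb : 1 < b) (hc : c < 0) :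
    Summable fun n : ℕ => b ^ ((n : ℝ) * c) := by
  have hpow : ∀ n : ℕ, b ^ ((n : ℝ) * c) = (b ^ c) ^ n := fun n => by
    rw [mul_comm, Real.rpow_mul (by linarith), Real.rpow_natCast]
  simpa only [hpow] using summable_geometric_of_lt_one (Real.rpow_nonneg (by linarith) c)
    (Real.rpow_lt_one_of_one_lt_of_neg hb hc)

theorem Real.two_rpow_neg_add_one_div_two_mul_two_rpow (x δ : ℝ) :
    (2 : ℝ) ^ (-(x + 1) / 2) * 2 ^ (x * δ / 2) = 2 ^ (x * (δ - 1) / 2) / √2 := by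
  rw [← Real.rpow_add two_pos, Real.sqrt_eq_rpow, ← Real.rpow_sub two_pos]
  ring_nf

/-- If the Schauder elements `ψ_{n,k} : [0,1] → ℝ^{d×d}` (viewed as operator-valued
functions, with at each level `n` at most `2^{n-1}` elements with pairwise disjoint
supports) satisfy the uniform bound `‖ψ_{n,k}‖_∞ ≤ M·2^{−(n+1)/2}`, and the coefficients
`ξ_{n,k} ∈ ℝ^d` satisfy `sup_k ‖ξ_{n,k}‖ < 2^{nδ/2}` for all `n > N₀` with `δ ∈ (0,1)`,
then the series `Σ_{n,k} ψ_{n,k}(t)·ξ_{n,k}` converges uniformly on `[0,1]` to a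
continuous function, with the tail bound `(M/√2)·Σ_{n≥N} 2^{n(δ−1)/2}` on partial sums. -/
theorem stmt_13 {d : ℕ} (M : ℝ)
    (ψ : ℕ → ℕ → ℝ → ((Fin d → ℝ) →L[ℝ] (Fin d → ℝ)))
    (hcont : ∀ n k, Continuous (ψ n k))
    (hbound : ∀ n k, ∀ t ∈ Set.Icc (0:ℝ) 1, ‖ψ n k t‖ ≤ M * (2:ℝ) ^ (-((n:ℝ) + 1) / 2))
    (hdisj : ∀ n t, ∀ k₁ k₂, k₁ ≠ k₂ → ψ n k₁ t = 0 ∨ ψ n k₂ t = 0)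
    (ξ : ℕ → ℕ → (Fin d → ℝ))
    (δ : ℝ) (hδ : δ ∈ Set.Ioo (0:ℝ) 1) (N₀ : ℕ)
    (hξ : ∀ n, N₀ < n → ∀ k, ‖ξ n k‖ < (2:ℝ) ^ ((n : ℝ) * δ / 2)) :
    let S : ℕ → ℝ → (Fin d → ℝ) := fun N t =>
      ∑ n ∈ Finset.range N, ∑ k ∈ Finset.range (2 ^ (n - 1)), ψ n k t (ξ n k)
    (∃ F : ℝ → (Fin d → ℝ), ContinuousOn F (Set.Icc 0 1) ∧
      TendstoUniformlyOn S F atTop (Set.Icc 0 1)) ∧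
    ∀ N₁ N₂ : ℕ, N₀ < N₁ → N₁ ≤ N₂ → ∀ t ∈ Set.Icc (0:ℝ) 1,
      ‖S N₂ t - S N₁ t‖
        ≤ M / Real.sqrt 2 * ∑' n : ℕ, (2:ℝ) ^ ((((N₁ + n : ℕ)) : ℝ) * (δ - 1) / 2) := by
  intro S
  set u : ℕ → ℝ := fun n => M / √2 * (2 : ℝ) ^ ((n : ℝ) * (δ - 1) / 2)
  have hu : Summable u := by
    have hexp : (δ - 1) / 2 < 0 := by linarith [hδ.2]
    refine ((Real.summable_rpow_natCast_mul_of_neg one_lt_two hexp).mul_left (M / √2)).congr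
      fun n => ?_
    simp only [u, mul_div_assoc]
  have hlevel : ∀ n, N₀ < n → ∀ t ∈ Set.Icc (0 : ℝ) 1,
      ‖∑ k ∈ range (2 ^ (n - 1)), ψ n k t (ξ n k)‖ ≤ u n := fun n hn t ht =>
    calc _ ≤ M * (2 : ℝ) ^ (-((n : ℝ) + 1) / 2) * 2 ^ ((n : ℝ) * δ / 2) :=
          norm_sum_apply_le_of_pairwise_eq_zero_or_eq_zero (nonempty_range_iff.mpr (by positivity))
            (fun k₁ _ k₂ _ hk => hdisj n t k₁ k₂ hk) (fun k _ => hbound n k t ht)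
            fun k _ => (hξ n hn k).le
      _ = u n := by
          rw [mul_assoc, Real.two_rpow_neg_add_one_div_two_mul_two_rpow]
          ring
  have hT := tendstoUniformlyOn_tsum_nat_eventually hu
    (eventually_atTop.mpr ⟨N₀ + 1, fun n hn => hlevel n hn⟩)
  have hScont : ∀ N, Continuous (S N) := fun N =>
    continuous_finsetSum _ fun n _ => continuous_finsetSum _ fun k _ =>
      (hcont n k).clm_apply continuous_const
  refine ⟨⟨_, hT.continuousOn (Frequently.of_forall fun N => (hScont N).continuousOn), hT⟩,
    fun N₁ N₂ hN₁ hN₁₂ t ht => ?_⟩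
  rw [← tsum_mul_left]
  simp only [S, ← sum_Ico_eq_sub _ hN₁₂]
  exact norm_sum_Ico_le_tsum (fun n hn => hlevel n (hN₁.trans_le hn) t ht) hu
end

section
/- Let Ψ_N be the lower block-triangular matrix with blocks Ψ^{i,j}_{n,k} = ψ_{n,k}(m_{i,j}) indexed by (n,k),(i,j) ∈ I_N in recursive dyadic order, where the Schauder functions satisfy Σ_{(n,k)∈I_N} ψ_{n,k}(t)ψ_{n,k}(s)ᵀ = C_N(t,s), the covariance of the conditioned process at dyadic points. Then Σ_N = Ψ_N·Ψ_Nᵀ is the Cholesky decomposition of the finite-dimensional covariance matrix [C_N(m_{i,j}, m_{k,l})], and Σ_N⁻¹ = Δ_Nᵀ·Δ_N where Δ_N = Ψ_N⁻¹. -/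
open Matrix

/-- If `Ψ` is a lower-triangular matrix with positive diagonal entries (indexed in the
recursive dyadic order) such that the covariance matrix `C` satisfies `C = Ψ * Ψᵀ`, then
`C = Ψ * Ψᵀ` is the Cholesky decomposition of `C` (in particular `C` is invertible), and
`C⁻¹ = Δᵀ * Δ` where `Δ = Ψ⁻¹`. -/
theorem stmt_15 {ι : Type*} [Fintype ι] [LinearOrder ι] [DecidableEq ι]
    (Ψ C : Matrix ι ι ℝ)
    (hlow : ∀ i j, i < j → Ψ i j = 0)
    (hdiag : ∀ i, 0 < Ψ i i)
    (hC : C = Ψ * Ψᵀ) :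
    IsUnit C.det ∧ C⁻¹ = (Ψ⁻¹)ᵀ * Ψ⁻¹ := by
  have hdet : Ψ.det = ∏ i, Ψ i i :=
    Matrix.det_of_lowerTriangular Ψ (fun i j h => hlow i j h)
  have hΨdet : IsUnit Ψ.det := by
    rw [hdet]
    exact (Finset.prod_pos fun i _ => hdiag i).ne'.isUnit
  have hCdet : IsUnit C.det := by
    rw [hC, Matrix.det_mul, Matrix.det_transpose]
    exact hΨdet.mul hΨdet
  refine ⟨hCdet, ?_⟩
  rw [hC, Matrix.mul_inv_rev, Matrix.transpose_nonsing_inv]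
end

section
/- Let ψ(t) = g(t)·h(t∧·) type Schauder element for the 1D case and define the dual distribution δ_{n,k} = g⁻¹·(M_{n,k} δ_{m_{n,k}} − L_{n,k} δ_{l_{n,k}} − R_{n,k} δ_{r_{n,k}}). Then the pairing ⟨δ_{p,q}, ψ_{n,k}⟩ = δ^{n,k}_{p,q} (Kronecker), i.e. the family (δ_{n,k}) is biorthogonal to (ψ_{n,k}). -/
/-!
On each dyadic cell of level `n`, `ψ_{n,k}` has the form `g · (a h + b)`, and the functional
`x ↦ (M x(m)/g(m) − L x(l)/g(l) − R x(r)/g(r))` kills every such function because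
`M = L + R` and `L (h(m) − h(l)) = R (h(r) − h(m))`. So `δ_{p,q}` annihilates `ψ_{n,k}` when
`p > n` (its support lies in one cell of level `n`), and also when `p ≤ n`, `(p,q) ≠ (n,k)`,
since then `l, m, r` are dyadic points of level `≤ n` other than `m_{n,k}`, where `ψ_{n,k}` vanishes.
On the diagonal the value is `M L (h(m) − h(l))`, which the choice of `σ_{n,k}` makes `1`.
-/

noncomputable section

/-- Left endpoint `l_{n,k} = k·2^{1−n}` of the dyadic support. -/
def lpt (n k : ℕ) : ℝ := (k : ℝ) * (2:ℝ) ^ ((1:ℤ) - (n:ℤ))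

/-- Midpoint `m_{n,k} = (2k+1)·2^{−n}` of the dyadic support. -/
def mpt (n k : ℕ) : ℝ := (2 * (k : ℝ) + 1) * (2:ℝ) ^ (-(n:ℤ))

/-- Right endpoint `r_{n,k} = (k+1)·2^{1−n}` of the dyadic support. -/
def rpt (n k : ℕ) : ℝ := ((k : ℝ) + 1) * (2:ℝ) ^ ((1:ℤ) - (n:ℤ))

/-- The bridge standard deviation `σ_{n,k}`, square root of
`Σ_{n,k} = g(m)²·(h(r)−h(m))(h(m)−h(l))/(h(r)−h(l))`. -/
def sigmank (g h : ℝ → ℝ) (n k : ℕ) : ℝ :=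
  Real.sqrt ((g (mpt n k)) ^ 2 *
    ((h (rpt n k) - h (mpt n k)) * (h (mpt n k) - h (lpt n k)) /
      (h (rpt n k) - h (lpt n k))))

/-- The constant `L_{n,k} = (h(m)−h(l))⁻¹ g(m)⁻¹ σ_{n,k}`. -/
def Lnk (g h : ℝ → ℝ) (n k : ℕ) : ℝ :=
  sigmank g h n k / (g (mpt n k) * (h (mpt n k) - h (lpt n k)))

/-- The constant `R_{n,k} = (h(r)−h(m))⁻¹ g(m)⁻¹ σ_{n,k}`. -/
def Rnk (g h : ℝ → ℝ) (n k : ℕ) : ℝ :=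
  sigmank g h n k / (g (mpt n k) * (h (rpt n k) - h (mpt n k)))

/-- The constant `M_{n,k} = L_{n,k} + R_{n,k}`. -/
def Mnk (g h : ℝ → ℝ) (n k : ℕ) : ℝ := Lnk g h n k + Rnk g h n k

/-- The one-dimensional Schauder element `ψ_{n,k}`. -/
def psink (g h : ℝ → ℝ) (n k : ℕ) (t : ℝ) : ℝ :=
  if t < lpt n k then 0
  else if t ≤ mpt n k then g t * (h t - h (lpt n k)) * Lnk g h n k
  else if t ≤ rpt n k then g t * (h (rpt n k) - h t) * Rnk g h n k
  else 0

/-- The pairing of the dual distribution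
`δ_{p,q} = g⁻¹·(M_{p,q} δ_{m_{p,q}} − L_{p,q} δ_{l_{p,q}} − R_{p,q} δ_{r_{p,q}})`
against a continuous function `x`. -/
def pairing (g h : ℝ → ℝ) (p q : ℕ) (x : ℝ → ℝ) : ℝ :=
  Mnk g h p q * x (mpt p q) / g (mpt p q)
    - Lnk g h p q * x (lpt p q) / g (lpt p q)
    - Rnk g h p q * x (rpt p q) / g (rpt p q)

open Set

lemma two_zpow_neg_eq_pow_mul {n p : ℕ} (hnp : n ≤ p) :
    (2:ℝ) ^ (-(n:ℤ)) = 2 ^ (p - n) * 2 ^ (-(p:ℤ)) := by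
  rw [← zpow_natCast, ← zpow_add₀ two_ne_zero]
  congr 1
  omega

lemma lpt_eq (n k : ℕ) : lpt n k = (2 * k : ℕ) * (2:ℝ) ^ (-(n:ℤ)) := by
  rw [lpt, sub_eq_add_neg, zpow_add₀ two_ne_zero]
  push_cast
  ring

lemma mpt_eq (n k : ℕ) : mpt n k = (2 * k + 1 : ℕ) * (2:ℝ) ^ (-(n:ℤ)) := by
  rw [mpt]
  push_cast
  ring

lemma rpt_eq (n k : ℕ) : rpt n k = (2 * k + 2 : ℕ) * (2:ℝ) ^ (-(n:ℤ)) := by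
  rw [rpt, sub_eq_add_neg, zpow_add₀ two_ne_zero]
  push_cast
  ring

lemma lpt_lt_mpt (n k : ℕ) : lpt n k < mpt n k := by
  rw [lpt_eq, mpt_eq]
  gcongr
  omega

lemma mpt_lt_rpt (n k : ℕ) : mpt n k < rpt n k := by
  rw [mpt_eq, rpt_eq]
  gcongr
  omega

lemma lpt_lt_rpt (n k : ℕ) : lpt n k < rpt n k := (lpt_lt_mpt n k).trans (mpt_lt_rpt n k)

lemma exists_cell_superset_of_lt {n p : ℕ} (hnp : n < p) (q : ℕ) :
    ∃ j : ℕ, Icc (lpt p q) (rpt p q) ⊆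
      Icc (j * (2:ℝ) ^ (-(n:ℤ))) ((j + 1 : ℕ) * (2:ℝ) ^ (-(n:ℤ))) := by
  obtain ⟨D, hD⟩ : ∃ D, 2 ^ (p - n) = 2 * D :=
    ⟨2 ^ (p - n - 1), by rw [← pow_succ']; congr 1; omega⟩
  have hDpos : 0 < D := by have := Nat.two_pow_pos (p - n); omega
  have hlow := Nat.div_mul_le_self q D
  have hhigh := Nat.lt_div_mul_add (a := q) hDpos
  refine ⟨q / D, Icc_subset_Icc ?_ ?_⟩
  · rw [lpt_eq, two_zpow_neg_eq_pow_mul hnp.le, ← mul_assoc]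
    gcongr
    exact_mod_cast show q / D * 2 ^ (p - n) ≤ 2 * q by rw [hD]; linarith
  · rw [rpt_eq, two_zpow_neg_eq_pow_mul hnp.le, ← mul_assoc]
    gcongr
    exact_mod_cast show 2 * q + 2 ≤ (q / D + 1) * 2 ^ (p - n) by rw [hD]; linarith

-- Both sides equal `σ / g(m)`; when a denominator vanishes, so does `σ`.
lemma Lnk_mul_eq_Rnk_mul (g h : ℝ → ℝ) (n k : ℕ) :
    Lnk g h n k * (h (mpt n k) - h (lpt n k)) = Rnk g h n k * (h (rpt n k) - h (mpt n k)) := by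
  by_cases hA : h (mpt n k) - h (lpt n k) = 0
  · have hσ : sigmank g h n k = 0 := by simp [sigmank, hA]
    simp [Rnk, hσ, hA]
  by_cases hB : h (rpt n k) - h (mpt n k) = 0
  · have hσ : sigmank g h n k = 0 := by simp [sigmank, hB]
    simp [Lnk, hσ, hB]
  by_cases hG : g (mpt n k) = 0
  · simp [Lnk, Rnk, hG]
  rw [Lnk, Rnk]
  field_simp

section Schauder

variable {g h : ℝ → ℝ} {n k : ℕ} {t : ℝ}

lemma psink_of_le_lpt (ht : t ≤ lpt n k) : psink g h n k t = 0 := by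
  rcases ht.lt_or_eq with ht | rfl
  · rw [psink, if_pos ht]
  · simp [psink, (lpt_lt_mpt n k).le]

lemma psink_of_rpt_le (ht : rpt n k ≤ t) : psink g h n k t = 0 := by
  have hl : ¬ t < lpt n k := not_lt.2 ((lpt_lt_rpt n k).le.trans ht)
  have hm : ¬ t ≤ mpt n k := not_le.2 ((mpt_lt_rpt n k).trans_le ht)
  rcases ht.lt_or_eq with ht | rfl
  · rw [psink, if_neg hl, if_neg hm, if_neg (not_le.2 ht)]
  · simp [psink, hl, hm]

lemma psink_of_mem_Icc_lpt_mpt (ht : t ∈ Icc (lpt n k) (mpt n k)) :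
    psink g h n k t = g t * (h t - h (lpt n k)) * Lnk g h n k := by
  rw [psink, if_neg (not_lt.2 ht.1), if_pos ht.2]

lemma psink_of_mem_Icc_mpt_rpt (ht : t ∈ Icc (mpt n k) (rpt n k)) :
    psink g h n k t = g t * (h (rpt n k) - h t) * Rnk g h n k := by
  have hl : ¬ t < lpt n k := not_lt.2 ((lpt_lt_mpt n k).le.trans ht.1)
  by_cases hm : t ≤ mpt n k
  · obtain rfl : t = mpt n k := le_antisymm hm ht.1
    rw [psink, if_neg hl, if_pos hm]
    linear_combination g (mpt n k) * Lnk_mul_eq_Rnk_mul g h n k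
  · rw [psink, if_neg hl, if_neg hm, if_pos ht.2]

lemma psink_natCast_mul_eq_zero {c : ℕ} (hc : c ≠ 2 * k + 1) :
    psink g h n k (c * (2:ℝ) ^ (-(n:ℤ))) = 0 := by
  rcases (by omega : c ≤ 2 * k ∨ 2 * k + 2 ≤ c) with hc | hc
  · exact psink_of_le_lpt (by rw [lpt_eq]; gcongr)
  · exact psink_of_rpt_le (by rw [rpt_eq]; gcongr)

-- `c 2^{-p}` is a dyadic point of level `≤ n` other than `m_{n,k}`.
lemma psink_dyadic_eq_zero {p c : ℕ} (hpn : p ≤ n) (hc : c * 2 ^ (n - p) ≠ 2 * k + 1) :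
    psink g h n k (c * (2:ℝ) ^ (-(p:ℤ))) = 0 := by
  rw [two_zpow_neg_eq_pow_mul hpn, ← mul_assoc]
  exact_mod_cast psink_natCast_mul_eq_zero hc

end Schauder

lemma exists_affine_on_cell (g h : ℝ → ℝ) (n k j : ℕ) :
    ∃ a b : ℝ, ∀ t ∈ Icc (j * (2:ℝ) ^ (-(n:ℤ))) ((j + 1 : ℕ) * (2:ℝ) ^ (-(n:ℤ))),
      psink g h n k t = g t * (a * h t + b) := by
  rcases (by omega : j + 1 ≤ 2 * k ∨ j = 2 * k ∨ j = 2 * k + 1 ∨ 2 * k + 2 ≤ j)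
    with hj | rfl | rfl | hj
  · refine ⟨0, 0, fun t ht => ?_⟩
    rw [psink_of_le_lpt (ht.2.trans (by rw [lpt_eq]; gcongr))]
    ring
  · refine ⟨Lnk g h n k, -Lnk g h n k * h (lpt n k), fun t ht => ?_⟩
    rw [psink_of_mem_Icc_lpt_mpt (by rwa [lpt_eq, mpt_eq])]
    ring
  · refine ⟨-Rnk g h n k, Rnk g h n k * h (rpt n k), fun t ht => ?_⟩
    rw [psink_of_mem_Icc_mpt_rpt (by rwa [mpt_eq, rpt_eq])]
    ring
  · refine ⟨0, 0, fun t ht => ?_⟩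
    have hr : rpt n k ≤ j * (2:ℝ) ^ (-(n:ℤ)) := by rw [rpt_eq]; gcongr
    rw [psink_of_rpt_le (hr.trans ht.1)]
    ring

section Pairing

variable {g h : ℝ → ℝ} {p q : ℕ}

lemma pairing_eq_zero_of_eq_affine (hg : ∀ t, g t ≠ 0) {x : ℝ → ℝ} (a b : ℝ)
    (hl : x (lpt p q) = g (lpt p q) * (a * h (lpt p q) + b))
    (hm : x (mpt p q) = g (mpt p q) * (a * h (mpt p q) + b))
    (hr : x (rpt p q) = g (rpt p q) * (a * h (rpt p q) + b)) :
    pairing g h p q x = 0 := by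
  have cancel : ∀ c y t, c * (g t * y) / g t = c * y := fun c y t => by
    field_simp [hg t]
  rw [pairing, hl, hm, hr, Mnk, cancel, cancel, cancel]
  linear_combination a * Lnk_mul_eq_Rnk_mul g h p q

lemma pairing_eq_zero_of_eqOn_affine (hg : ∀ t, g t ≠ 0) {x : ℝ → ℝ} (a b : ℝ)
    (hx : ∀ t ∈ Icc (lpt p q) (rpt p q), x t = g t * (a * h t + b)) :
    pairing g h p q x = 0 :=
  pairing_eq_zero_of_eq_affine hg a b (hx _ ⟨le_rfl, (lpt_lt_rpt p q).le⟩)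
    (hx _ ⟨(lpt_lt_mpt p q).le, (mpt_lt_rpt p q).le⟩) (hx _ ⟨(lpt_lt_rpt p q).le, le_rfl⟩)

lemma pairing_eq_zero_of_vanish (hg : ∀ t, g t ≠ 0) {x : ℝ → ℝ}
    (hl : x (lpt p q) = 0) (hm : x (mpt p q) = 0) (hr : x (rpt p q) = 0) :
    pairing g h p q x = 0 :=
  pairing_eq_zero_of_eq_affine hg 0 0 (by simp [hl]) (by simp [hm]) (by simp [hr])

-- With `A = h(m) - h(l)`, `B = h(r) - h(m)`: `L A = σ / g(m)` and `σ² = g(m)² A B / (A + B)`.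
lemma pairing_psink_self (hg : ∀ t, g t ≠ 0) (hmono : StrictMono h) (n k : ℕ) :
    pairing g h n k (psink g h n k) = 1 := by
  have hA : 0 < h (mpt n k) - h (lpt n k) := sub_pos.2 (hmono (lpt_lt_mpt n k))
  have hB : 0 < h (rpt n k) - h (mpt n k) := sub_pos.2 (hmono (mpt_lt_rpt n k))
  have hσ : sigmank g h n k ^ 2 * (h (rpt n k) - h (lpt n k)) =
      g (mpt n k) ^ 2 * ((h (rpt n k) - h (mpt n k)) * (h (mpt n k) - h (lpt n k))) := by
    have hAB : 0 < h (rpt n k) - h (lpt n k) := by linarith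
    rw [sigmank, Real.sq_sqrt (by positivity)]
    field_simp
  rw [pairing, psink_of_le_lpt le_rfl, psink_of_rpt_le le_rfl,
    psink_of_mem_Icc_lpt_mpt ⟨(lpt_lt_mpt n k).le, le_rfl⟩, Mnk, Lnk, Rnk]
  have hG := hg (mpt n k)
  field_simp
  linear_combination hσ

lemma pairing_psink_of_le (hg : ∀ t, g t ≠ 0) {n k : ℕ} (hpn : p ≤ n)
    (hne : ¬(n = p ∧ k = q)) : pairing g h p q (psink g h n k) = 0 := by
  have hnot_mid : ∀ c, (p = n → c ≠ 2 * k + 1) → c * 2 ^ (n - p) ≠ 2 * k + 1 := by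
    intro c hc
    rcases hpn.lt_or_eq with hlt | rfl
    · obtain ⟨r, hr⟩ : Even (c * 2 ^ (n - p)) :=
        (Nat.even_pow.2 ⟨even_two, by omega⟩).mul_left c
      omega
    · simpa using hc rfl
  refine pairing_eq_zero_of_vanish hg ?_ ?_ ?_
  · rw [lpt_eq]; exact psink_dyadic_eq_zero hpn (hnot_mid _ (by omega))
  · rw [mpt_eq]; exact psink_dyadic_eq_zero hpn (hnot_mid _ (by omega))
  · rw [rpt_eq]; exact psink_dyadic_eq_zero hpn (hnot_mid _ (by omega))

lemma pairing_psink_of_lt (hg : ∀ t, g t ≠ 0) {n k : ℕ} (hnp : n < p) :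
    pairing g h p q (psink g h n k) = 0 := by
  obtain ⟨j, hj⟩ := exists_cell_superset_of_lt hnp q
  obtain ⟨a, b, hab⟩ := exists_affine_on_cell g h n k j
  exact pairing_eq_zero_of_eqOn_affine hg a b fun t ht => hab t (hj ht)

end Pairing

theorem stmt_17_general (g h : ℝ → ℝ) (hgpos : ∀ t, 0 < g t)
    (hmono : StrictMono h) :
    ∀ n, 1 ≤ n → ∀ k, k < 2 ^ (n - 1) → ∀ p, 1 ≤ p → ∀ q, q < 2 ^ (p - 1) →
      pairing g h p q (psink g h n k) = if n = p ∧ k = q then 1 else 0 := by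
  intro n _ k _ p _ q _
  have hg : ∀ t, g t ≠ 0 := fun t => (hgpos t).ne'
  split_ifs with hnk
  · obtain ⟨rfl, rfl⟩ := hnk
    exact pairing_psink_self hg hmono n k
  · rcases le_or_gt p n with hpn | hnp
    · exact pairing_psink_of_le hg hpn hnk
    · exact pairing_psink_of_lt hg hnp

/-- Biorthogonality: the dual family `(δ_{p,q})` pairs with the Schauder family
`(ψ_{n,k})` to give the Kronecker delta, `⟨δ_{p,q}, ψ_{n,k}⟩ = δ^{n,k}_{p,q}`. -/
theorem stmt_17 (g h : ℝ → ℝ) (hg : Continuous g) (hgpos : ∀ t, 0 < g t)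
    (hh : Continuous h) (hmono : StrictMono h) :
    ∀ n, 1 ≤ n → ∀ k, k < 2 ^ (n - 1) → ∀ p, 1 ≤ p → ∀ q, q < 2 ^ (p - 1) →
      pairing g h p q (psink g h n k) = if n = p ∧ k = q then 1 else 0 :=
  stmt_17_general g h hgpos hmono

end
end

section
/- Let R be the integral operator on L²[0,1] with kernel R(t,s) = (α(t∨s) − β(t∨s))·f(t∧s)/f(t∨s) + f(t)·(∫_{t∨s}^1 (α(u)−β(u))²/f(u)² du)·f(s), where α, β are continuous and f continuous positive. Then R is a Hilbert–Schmidt (hence compact) trace-class operator with trace Tr(R) = ∫₀¹(α(t)−β(t))dt + ∫₀¹ (h(t)/f(t)²)·(α(t)−β(t))² dt, where h(t) = ∫₀ᵗ f(u)² du. -/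
/-!
The kernel is continuous on the compact square `[0,1]²`, hence square-integrable. On the diagonal
`R(t,t) = (α−β)(t) + f(t)² G(t)` with `G(t) = ∫_t^1 (α−β)²/f²`, and integrating by parts against
`h' = f²`, `G' = −(α−β)²/f²`, `h(0) = G(1) = 0` turns `∫₀¹ f² G` into `∫₀¹ h (α−β)²/f²`.
-/

open MeasureTheory

noncomputable section

/-- The kernel `R(t,s) = (α(t∨s) − β(t∨s))·f(t∧s)/f(t∨s)
  + f(t)·(∫_{t∨s}^1 (α(u)−β(u))²/f(u)² du)·f(s)`. -/
def Rker (α β f : ℝ → ℝ) (t s : ℝ) : ℝ :=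
  (α (max t s) - β (max t s)) * f (min t s) / f (max t s)
    + f t * (∫ u in (max t s)..1, (α u - β u) ^ 2 / (f u) ^ 2) * f s

open Set Interval

section IntervalIntegral

variable {a b x : ℝ} {p : ℝ → ℝ}

theorem hasDerivAt_integral_right_of_continuousOn (hp : ContinuousOn p [[a, b]])
    (hx : x ∈ Ioo (min a b) (max a b)) :
    HasDerivAt (fun y => ∫ u in a..y, p u) (p x) x :=
  intervalIntegral.integral_hasDerivAt_right
    (hp.mono (uIcc_subset_uIcc_left (Ioo_subset_Icc_self hx))).intervalIntegrable
    (hp.mono Ioo_subset_Icc_self |>.stronglyMeasurableAtFilter isOpen_Ioo x hx)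
    (hp.continuousAt (Icc_mem_nhds hx.1 hx.2))

theorem hasDerivAt_integral_left_of_continuousOn (hp : ContinuousOn p [[a, b]])
    (hx : x ∈ Ioo (min a b) (max a b)) :
    HasDerivAt (fun y => ∫ u in y..b, p u) (-p x) x :=
  intervalIntegral.integral_hasDerivAt_left
    (hp.mono (uIcc_subset_uIcc_right (Ioo_subset_Icc_self hx))).intervalIntegrable
    (hp.mono Ioo_subset_Icc_self |>.stronglyMeasurableAtFilter isOpen_Ioo x hx)
    (hp.continuousAt (Icc_mem_nhds hx.1 hx.2))

/-- Both sides equal the integral of `p x * q u` over the triangle `x ≤ u`. -/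
theorem integral_mul_integral_tail_eq_integral_primitive_mul {q : ℝ → ℝ}
    (hp : ContinuousOn p [[a, b]]) (hq : ContinuousOn q [[a, b]]) :
    ∫ x in a..b, p x * ∫ u in x..b, q u = ∫ x in a..b, (∫ u in a..x, p u) * q x := by
  have hparts := intervalIntegral.integral_mul_deriv_eq_deriv_mul_of_hasDerivAt
    (intervalIntegral.continuousOn_primitive_interval (hp.integrableOn_compact isCompact_uIcc))
    (intervalIntegral.continuousOn_primitive_interval_left
      (hq.integrableOn_compact isCompact_uIcc))
    (fun x hx => hasDerivAt_integral_right_of_continuousOn hp hx)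
    (fun x hx => hasDerivAt_integral_left_of_continuousOn hq hx)
    hp.intervalIntegrable hq.neg.intervalIntegrable
  simp only [intervalIntegral.integral_same, mul_zero, zero_mul, sub_zero, zero_sub, mul_neg,
    intervalIntegral.integral_neg, neg_inj] at hparts
  exact hparts.symm

end IntervalIntegral

section Kernel

variable {α β f : ℝ → ℝ}

theorem continuousOn_sq_sub_div_sq {s : Set ℝ} (hα : ContinuousOn α s) (hβ : ContinuousOn β s)
    (hf : ContinuousOn f s) (hf0 : ∀ t ∈ s, f t ≠ 0) :
    ContinuousOn (fun u => (α u - β u) ^ 2 / f u ^ 2) s :=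
  ((hα.sub hβ).pow 2).div (hf.pow 2) fun u hu => pow_ne_zero 2 (hf0 u hu)

theorem Rker_self {t : ℝ} (ht : f t ≠ 0) :
    Rker α β f t t = (α t - β t) + f t ^ 2 * ∫ u in t..1, (α u - β u) ^ 2 / f u ^ 2 := by
  rw [Rker, max_self, min_self, mul_div_assoc, div_self ht]
  ring

theorem continuousOn_Rker (hα : ContinuousOn α (Icc 0 1)) (hβ : ContinuousOn β (Icc 0 1))
    (hf : ContinuousOn f (Icc 0 1)) (hfpos : ∀ t ∈ Icc (0:ℝ) 1, 0 < f t) :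
    ContinuousOn (fun p : ℝ × ℝ => Rker α β f p.1 p.2) (Icc 0 1 ×ˢ Icc 0 1) := by
  have hmax : MapsTo (fun p : ℝ × ℝ => max p.1 p.2) (Icc 0 1 ×ˢ Icc 0 1) (Icc 0 1) :=
    fun p hp => ⟨le_max_of_le_left hp.1.1, max_le hp.1.2 hp.2.2⟩
  have hmin : MapsTo (fun p : ℝ × ℝ => min p.1 p.2) (Icc 0 1 ×ˢ Icc 0 1) (Icc 0 1) :=
    fun p hp => ⟨le_min hp.1.1 hp.2.1, min_le_of_left_le hp.1.2⟩
  have hfst : MapsTo Prod.fst (Icc (0:ℝ) 1 ×ˢ Icc (0:ℝ) 1) (Icc 0 1) := fun p hp => hp.1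
  have hsnd : MapsTo Prod.snd (Icc (0:ℝ) 1 ×ˢ Icc (0:ℝ) 1) (Icc 0 1) := fun p hp => hp.2
  have hcmax := (continuous_fst.max continuous_snd).continuousOn (s := Icc (0:ℝ) 1 ×ˢ Icc 0 1)
  have hcmin := (continuous_fst.min continuous_snd).continuousOn (s := Icc (0:ℝ) 1 ×ˢ Icc 0 1)
  have hg := continuousOn_sq_sub_div_sq hα hβ hf fun u hu => (hfpos u hu).ne'
  have hG : ContinuousOn (fun x => ∫ u in x..1, (α u - β u) ^ 2 / f u ^ 2) (Icc 0 1) := by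
    rw [← uIcc_of_le zero_le_one] at hg ⊢
    exact intervalIntegral.continuousOn_primitive_interval_left
      (hg.integrableOn_compact isCompact_uIcc)
  exact ((((hα.comp hcmax hmax).sub (hβ.comp hcmax hmax)).mul (hf.comp hcmin hmin)).div
      (hf.comp hcmax hmax) fun p hp => (hfpos _ (hmax hp)).ne').add
    (((hf.comp continuousOn_fst hfst).mul (hG.comp hcmax hmax)).mul
      (hf.comp continuousOn_snd hsnd))

end Kernel

/-- For `α, β` continuous and `f` continuous positive on `[0,1]`, the kernel `R` is
square-integrable on `[0,1]²` (so the associated integral operator on `L²[0,1]` is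
Hilbert–Schmidt, hence compact), and it is of trace class with trace
`∫₀¹ R(t,t) dt = ∫₀¹(α−β) + ∫₀¹ (h/f²)(α−β)²` where `h(t) = ∫₀ᵗ f²`. -/
theorem stmt_19 (α β f : ℝ → ℝ)
    (hα : ContinuousOn α (Set.Icc 0 1)) (hβ : ContinuousOn β (Set.Icc 0 1))
    (hf : ContinuousOn f (Set.Icc 0 1)) (hfpos : ∀ t ∈ Set.Icc (0:ℝ) 1, 0 < f t) :
    IntegrableOn (fun p : ℝ × ℝ => (Rker α β f p.1 p.2) ^ 2)
      (Set.Icc 0 1 ×ˢ Set.Icc 0 1) ∧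
    ∫ t in (0:ℝ)..1, Rker α β f t t
      = (∫ t in (0:ℝ)..1, (α t - β t))
        + ∫ t in (0:ℝ)..1, (∫ u in (0:ℝ)..t, (f u) ^ 2) / (f t) ^ 2 * (α t - β t) ^ 2 := by
  refine ⟨((continuousOn_Rker hα hβ hf hfpos).pow 2).integrableOn_compact
    (isCompact_Icc.prod isCompact_Icc), ?_⟩
  rw [← uIcc_of_le zero_le_one] at hα hβ hf hfpos
  have hg := continuousOn_sq_sub_div_sq hα hβ hf fun u hu => (hfpos u hu).ne'
  have hf2 : ContinuousOn (fun u => f u ^ 2) [[0, 1]] := hf.pow 2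
  calc ∫ t in (0:ℝ)..1, Rker α β f t t
      = ∫ t in (0:ℝ)..1, (α t - β t) + f t ^ 2 * ∫ u in t..1, (α u - β u) ^ 2 / f u ^ 2 :=
        intervalIntegral.integral_congr fun t ht => Rker_self (hfpos t ht).ne'
    _ = (∫ t in (0:ℝ)..1, (α t - β t))
          + ∫ t in (0:ℝ)..1, (∫ u in (0:ℝ)..t, f u ^ 2) * ((α t - β t) ^ 2 / f t ^ 2) := by
        have hG := intervalIntegral.continuousOn_primitive_interval_left
          (hg.integrableOn_compact (μ := volume) isCompact_uIcc)
        rw [intervalIntegral.integral_add ?_ ?_,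
          integral_mul_integral_tail_eq_integral_primitive_mul hf2 hg]
        · exact (hα.sub hβ).intervalIntegrable
        · exact (hf2.mul hG).intervalIntegrable
    _ = _ := by
        congr 1
        exact intervalIntegral.integral_congr fun t _ => by ring
end
end
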